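/- (Angle–distance coupling of uniform-offset FDA) Let M ≥ 1, δf > 0, c > 0, and fix (R_i, θ_i) ∈ ℝ × ℝ. For the uniform-offset FDA steering vector a(R, θ) with m-th entry (1/√M)·exp(i·2π·m·(sin θ/2 − δf·R/c)), for every angle θ_j ∈ ℝ there exists R_j ∈ ℝ such that |a(R_i, θ_i)^H · a(R_j, θ_j)| = 1. Hence for a fixed target location there are infinitely many locations (R_j, θ_j), one at every angle, that are indistinguishable from it, producing the S-shaped beampattern. -/

import Mathlib

/-!
The steering vector depends on the location only through the phase `sin θ / 2 − δf·R/c`,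
and for a fixed angle this phase is an affine bijection of the range. So at every angle
`θ_j` some range `R_j` reproduces the phase of `(R_i, θ_i)`, hence the steering vector itself,
and the correlation becomes the squared norm of a unit vector.
-/

/-- The normalized uniform-offset FDA steering vector at location `(R, θ)`:
`m`-th entry `(1/√M)·exp(i·2π·m·(sin θ/2 − δf·R/c))`. -/
noncomputable def steer (M : ℕ) (δf c R θ : ℝ) (m : Fin M) : ℂ :=
  ((Real.sqrt (M : ℝ) : ℝ) : ℂ)⁻¹ *
    Complex.exp (Complex.I *
      ((2 * Real.pi * ((m : ℕ) : ℝ) * (Real.sin θ / 2 - δf * R / c) : ℝ) : ℂ))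

section Steer

variable {M : ℕ} {δf c : ℝ}

theorem steer_eq_of_phase_eq {R θ R' θ' : ℝ}
    (h : Real.sin θ' / 2 - δf * R' / c = Real.sin θ / 2 - δf * R / c) :
    steer M δf c R' θ' = steer M δf c R θ := by
  funext m
  simp only [steer, h]

theorem exists_range_phase_eq (hδf : δf ≠ 0) (hc : c ≠ 0) (R θ θ' : ℝ) :
    ∃ R' : ℝ, Real.sin θ' / 2 - δf * R' / c = Real.sin θ / 2 - δf * R / c :=
  ⟨R + c * (Real.sin θ' - Real.sin θ) / (2 * δf), by field_simp; ring⟩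

theorem norm_steer (R θ : ℝ) (m : Fin M) : ‖steer M δf c R θ m‖ = (Real.sqrt M)⁻¹ := by
  rw [steer, norm_mul, Complex.norm_exp_I_mul_ofReal, mul_one, norm_inv,
    Complex.norm_real, Real.norm_of_nonneg (Real.sqrt_nonneg _)]

theorem sum_conj_steer_mul_self (hM : M ≠ 0) (R θ : ℝ) :
    ∑ m : Fin M, (starRingEnd ℂ) (steer M δf c R θ m) * steer M δf c R θ m = 1 := by
  simp only [Complex.conj_mul', norm_steer, Finset.sum_const, Finset.card_univ,
    Fintype.card_fin, nsmul_eq_mul]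
  push_cast
  rw [inv_pow, ← Complex.ofReal_pow, Real.sq_sqrt (Nat.cast_nonneg M), Complex.ofReal_natCast]
  exact mul_inv_cancel₀ (Nat.cast_ne_zero.mpr hM)

end Steer

/-- (Angle–distance coupling of uniform-offset FDA) Fix `(R_i, θ_i)`. For
every angle `θ_j` there exists a distance `R_j` such that the correlation
`|a(R_i,θ_i)^H · a(R_j,θ_j)| = 1`: at every angle there is a location
indistinguishable from the target, producing the S-shaped beampattern. -/
theorem stmt_14 (M : ℕ) (hM : 1 ≤ M) (δf c : ℝ) (hδf : 0 < δf) (hc : 0 < c)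
    (Ri θi : ℝ) :
    ∀ θj : ℝ, ∃ Rj : ℝ,
      ‖(∑ m : Fin M,
        (starRingEnd ℂ) (steer M δf c Ri θi m) * steer M δf c Rj θj m)‖ = 1 := by
  intro θj
  obtain ⟨Rj, hphase⟩ := exists_range_phase_eq hδf.ne' hc.ne' Ri θi θj
  refine ⟨Rj, ?_⟩
  rw [steer_eq_of_phase_eq hphase, sum_conj_steer_mul_self (by omega), norm_one]
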